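/- Let K ∈ {RC, DC, SC}, let A ∈ K_n be complete and atomic, and let N be a network over A. If f ∈ edges(N), i,j ∈ n, and f∘[i/j] ∈ edges(N), then N(f∘[i/j]) = t^i_j N(f). -/
import Mathlib


namespace CylRep

/-- The replacement `[i/j]` on `n`: fixes everything except sending `i` to `j`. -/
def replFn (n : ℕ) (i j : Fin n) : Fin n → Fin n := fun k => if k = i then j else k

/-- A Boolean algebra equipped with cylindric-type operators: cylindrifications `c i`
and diagonal elements `d i j`. -/
structure CylOps (n : ℕ) (α : Type*) [BooleanAlgebra α] where
  c : Fin n → α → α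
  d : Fin n → Fin n → α

variable {n : ℕ} {α : Type*} {β : Type*}

section Ops
variable [BooleanAlgebra α]

/-- The substitution operator `s^i_j`: `s^i_i x = x`, and `s^i_j x = c_i (x ⊓ d_{ij})` for `i ≠ j`. -/
def CylOps.s (A : CylOps n α) (i j : Fin n) (x : α) : α :=
  if i = j then x else A.c i (x ⊓ A.d i j)

/-- The operator `t^i_j`: `t^i_i x = x`, and `t^i_j x = c_i x ⊓ d_{ij}` for `i ≠ j`. -/
def CylOps.t (A : CylOps n α) (i j : Fin n) (x : α) : α :=
  if i = j then x else A.c i x ⊓ A.d i j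

/-- The term `s^i_j c_j x ⊓ s^j_i c_i x ⊓ ∏_{k ≠ i,j} s^k_i s^i_j s^j_k c_k x`
(the empty product, when `n = 2`, is `⊤`). -/
def CylOps.pRaw (A : CylOps n α) (i j : Fin n) (x : α) : α :=
  A.s i j (A.c j x) ⊓ A.s j i (A.c i x) ⊓
    (Finset.univ.filter (fun k : Fin n => k ≠ i ∧ k ≠ j)).inf
      (fun k => A.s k i (A.s i j (A.s j k (A.c k x))))

/-- The operator `p_{ij}`: `p_{ii} x = x`, and otherwise the term `pRaw`. -/
def CylOps.p (A : CylOps n α) (i j : Fin n) (x : α) : α :=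
  if i = j then x else A.pRaw i j x

/-- `tauSeq is js t = [i_t/j_t] ∘ ⋯ ∘ [i_1/j_1]` (0-indexed: composes the first `t`
replacements, the one of index `0` acting first); `tauSeq is js 0 = id`. -/
def tauSeq (is js : ℕ → Fin n) : ℕ → (Fin n → Fin n)
  | 0 => id
  | t + 1 => replFn n (is t) (js t) ∘ tauSeq is js t

/-- `lhsSeq A is js ks x m = s^{i_m}_{j_m} c_{k_m} ⋯ s^{i_1}_{j_1} c_{k_1} x` (0-indexed). -/
def lhsSeq (A : CylOps n α) (is js ks : ℕ → Fin n) (x : α) : ℕ → α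
  | 0 => x
  | t + 1 => A.s (is t) (js t) (A.c (ks t) (lhsSeq A is js ks x t))

/-- The set `K = {i_1, …, i_m, k_1, …, k_m} \ {i}` (0-indexed). -/
def Kset (m : ℕ) (is ks : ℕ → Fin n) (i : Fin n) : Finset (Fin n) :=
  (((Finset.range m).image is) ∪ ((Finset.range m).image ks)).erase i

/-- Axiom (Ax7): for every `m ≥ 1` and all indices `i_1,…,i_m, j_1,…,j_m, k_1,…,k_m, i`
such that `k_{t+1} ∉ ([i_t/j_t]∘⋯∘[i_1/j_1]) * K` for all `t < m`,
`s^{i_m}_{j_m} c_{k_m} ⋯ s^{i_1}_{j_1} c_{k_1} x ⊓ ∏ {d_{l, τ l} : l ∈ K} ≤ c_i x`,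
where `τ = [i_m/j_m]∘⋯∘[i_1/j_1]` and `K = {i_1,…,i_m,k_1,…,k_m} \ {i}`. -/
def Ax7 (A : CylOps n α) : Prop :=
  ∀ m : ℕ, 1 ≤ m → ∀ (is js ks : ℕ → Fin n) (i : Fin n),
    (∀ t < m, ks t ∉ (Kset m is ks i).image (tauSeq is js t)) →
    ∀ x : α,
      lhsSeq A is js ks x m ⊓
          (Kset m is ks i).inf (fun l => A.d l (tauSeq is js m l)) ≤
        A.c i x

/-- Axiom (Ax11) (stated for general `n` via proofs that `0 < n` and `1 < n`):
`x ⊓ -d_{01} ≤ c_0 c_1 (-d_{01} ⊓ s^0_1 c_1 x ⊓ s^1_0 c_0 x)`. -/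
def Ax11 (A : CylOps n α) : Prop :=
  ∀ (h0 : 0 < n) (h1 : 1 < n) (x : α),
    x ⊓ (A.d ⟨0, h0⟩ ⟨1, h1⟩)ᶜ ≤
      A.c ⟨0, h0⟩ (A.c ⟨1, h1⟩
        ((A.d ⟨0, h0⟩ ⟨1, h1⟩)ᶜ ⊓ A.s ⟨0, h0⟩ ⟨1, h1⟩ (A.c ⟨1, h1⟩ x) ⊓
          A.s ⟨1, h1⟩ ⟨0, h0⟩ (A.c ⟨0, h0⟩ x)))

/-- Axiom (Ax12): `x ≤ c_i c_j (s^i_j c_j x ⊓ s^j_i c_i x ⊓ ∏_{k≠i,j} s^k_i s^i_j s^j_k c_k x)`. -/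
def Ax12 (A : CylOps n α) : Prop :=
  ∀ (i j : Fin n) (x : α), x ≤ A.c i (A.c j (A.pRaw i j x))

/-- Axioms (Ax0)–(Ax6) ((Ax0), the Boolean axioms, being the `BooleanAlgebra` instance). -/
structure IsRC6 (A : CylOps n α) : Prop where
  ax1 : ∀ i, A.c i (⊥ : α) = ⊥
  ax2 : ∀ i (x : α), x ≤ A.c i x
  ax3 : ∀ i (x y : α), A.c i (x ⊓ A.c i y) = A.c i x ⊓ A.c i y
  ax4 : ∀ i, A.d i i = (⊤ : α)
  ax5 : ∀ i j k : Fin n, k ≠ i → k ≠ j →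
    A.d i k ⊓ A.d k j ≤ A.d i j ∧ A.d i j = A.d j i ∧ A.d j i = A.c k (A.d j i)
  ax6 : ∀ (i j : Fin n) (x : α), i ≠ j → A.c i (x ⊓ A.d i j) ⊓ A.d i j ≤ x

/-- The class `RC_n`: axioms (Ax0)–(Ax7). -/
structure IsRC (A : CylOps n α) extends IsRC6 A : Prop where
  ax7 : Ax7 A

/-- Axioms (Ax8)–(Ax10). -/
structure DCAxioms (A : CylOps n α) : Prop where
  ax8 : ∀ (i j k : Fin n) (x : α), k ≠ i → k ≠ j →
    A.c j (A.c i x) ⊓ A.d j k ≤ A.c i (A.c j x)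
  ax9 : ∀ i j k : Fin n, k ≠ i → k ≠ j → A.d i j = A.c k (A.d i k ⊓ A.d k j)
  ax10 : ∀ (i j k m : Fin n) (x : α), k ≠ i → k ≠ j → k ≠ m → m ≠ i → m ≠ j →
    A.s k i (A.s i j (A.s j m (A.s m k (A.c k x)))) =
      A.s k m (A.s m i (A.s i j (A.s j k (A.c k x))))

/-- The class `DC_n`: axioms (Ax0)–(Ax10). -/
structure IsDC (A : CylOps n α) extends IsRC A, DCAxioms A : Prop

/-- The class `SC_n`: `DC_n` together with (Ax11) when `n = 2` and (Ax12) when `n ≥ 3`. -/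
structure IsSC (A : CylOps n α) extends IsDC A : Prop where
  ax11 : n = 2 → Ax11 A
  ax12 : 3 ≤ n → Ax12 A

/-- The class `DC_n⁻`: the axioms of `DC_n` with (Ax7) omitted. -/
structure IsDCminus (A : CylOps n α) extends IsRC6 A, DCAxioms A : Prop

/-- The class `SC_n⁻`: the axioms of `SC_n` with (Ax7) omitted. -/
structure IsSCminus (A : CylOps n α) extends IsDCminus A : Prop where
  ax11 : n = 2 → Ax11 A
  ax12 : 3 ≤ n → Ax12 A

/-- `compList n [(i₁,j₁),…,(iₘ,jₘ)] = [i₁/j₁] ∘ ⋯ ∘ [iₘ/jₘ]` (so `[iₘ/jₘ]` acts first). -/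
def compList (n : ℕ) (L : List (Fin n × Fin n)) : Fin n → Fin n :=
  L.foldr (fun p g => replFn n p.1 p.2 ∘ g) id

/-- `tApplyList A [(i₁,j₁),…,(iₘ,jₘ)] x = t^{iₘ}_{jₘ} ⋯ t^{i₁}_{j₁} x`. -/
def tApplyList (A : CylOps n α) (L : List (Fin n × Fin n)) (x : α) : α :=
  L.foldl (fun y p => A.t p.1 p.2 y) x

end Ops

/-- The three classes of algebras considered. -/
inductive CylClass : Type
  | RC | DC | SC

/-- Membership of `A` in the class `K_n` for `K ∈ {RC, DC, SC}`. -/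
def InClass [BooleanAlgebra α] (κ : CylClass) (A : CylOps n α) : Prop :=
  match κ with
  | CylClass.RC => IsRC A
  | CylClass.DC => IsDC A
  | CylClass.SC => IsSC A

/-- A pre-network: a finite set of nodes together with a partial map (here: a total map
`label` whose meaningful domain is `edges`) from `n`-sequences of nodes to atoms of `α`. -/
structure PreNetwork (n : ℕ) (α : Type*) (β : Type*) [BooleanAlgebra α] where
  nodes : Finset β
  edges : Set (Fin n → β)
  label : (Fin n → β) → α
  edge_nodes : ∀ f ∈ edges, ∀ i, f i ∈ nodes
  label_atom : ∀ f ∈ edges, IsAtom (label f)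

/-- `g ≡_i f`: the sequences agree everywhere except possibly at `i`. -/
def EqExcept (i : Fin n) (f g : Fin n → β) : Prop := ∀ l, l ≠ i → f l = g l

/-- A set of sequences is diagonalizable if it is closed under `f ↦ f ∘ [i/j]`. -/
def Diagonalizable (E : Set (Fin n → β)) : Prop :=
  ∀ f ∈ E, ∀ i j : Fin n, (f ∘ replFn n i j) ∈ E

/-- A set of sequences is permutable if it is closed under `f ↦ f ∘ [i,j]`. -/
def Permutable (E : Set (Fin n → β)) : Prop :=
  ∀ f ∈ E, ∀ i j : Fin n, (fun k => f (Equiv.swap i j k)) ∈ E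

section Net
variable [BooleanAlgebra α]

/-- `h 0, …, h m` is a zigzag from `f` to `g` in the pre-network `N`. -/
def IsZigzag (A : CylOps n α) (N : PreNetwork n α β) (f g : Fin n → β)
    (m : ℕ) (h : ℕ → Fin n → β) : Prop :=
  h 0 = f ∧ h m = g ∧ (∀ t ≤ m, h t ∈ N.edges) ∧
    (∀ t ≤ m, Set.range f ∩ Set.range g ⊆ Set.range (h t)) ∧
    (∀ t < m, ∃ i : Fin n, h t ≠ h (t + 1) ∧ EqExcept i (h t) (h (t + 1)) ∧
      A.c i (N.label (h t)) = A.c i (N.label (h (t + 1))))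

/-- `N` is a network (for the class `κ` over the algebra `A`). -/
def IsNetwork (κ : CylClass) (A : CylOps n α) (N : PreNetwork n α β) : Prop :=
  (κ = CylClass.DC → Diagonalizable N.edges) ∧
  (κ = CylClass.SC → Diagonalizable N.edges ∧ Permutable N.edges) ∧
  (∀ f ∈ N.edges, ∀ i j : Fin n, N.label f ≤ A.d i j ↔ f i = f j) ∧
  (∀ f ∈ N.edges, ∀ g ∈ N.edges,
    0 < (Set.range f ∩ Set.range g).ncard →
    (Set.range f ∩ Set.range g).ncard < n →
    ∃ m h, IsZigzag A N f g m h)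

/-- `N ⊆ N'` for pre-networks. -/
def PNLe (N N' : PreNetwork n α β) : Prop :=
  N.nodes ⊆ N'.nodes ∧ N.edges ⊆ N'.edges ∧ ∀ f ∈ N.edges, N'.label f = N.label f

end Net

/-- The cylindrification `C_i` relativized to the unit `V`. -/
def CSet (V : Set (Fin n → β)) (i : Fin n) (X : Set (Fin n → β)) : Set (Fin n → β) :=
  {f ∈ V | ∃ g ∈ X, ∀ l, l ≠ i → g l = f l}

/-- The diagonal `D_{ij}` relativized to the unit `V`. -/
def DSet (V : Set (Fin n → β)) (i j : Fin n) : Set (Fin n → β) :=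
  {f ∈ V | f i = f j}

/-- `Ψ` is an embedding of `A` into the full relativized cylindric set algebra `P(V)`:
an injective Boolean homomorphism that sends `c_i` to `C_i` and `d_{ij}` to `D_{ij}`. -/
def IsRepresentation [BooleanAlgebra α] (A : CylOps n α) (V : Set (Fin n → β))
    (Ψ : α → Set (Fin n → β)) : Prop :=
  Function.Injective Ψ ∧ (∀ x, Ψ x ⊆ V) ∧
    Ψ ⊥ = ∅ ∧ Ψ ⊤ = V ∧ (∀ x y, Ψ (x ⊔ y) = Ψ x ∪ Ψ y) ∧
    (∀ x y, Ψ (x ⊓ y) = Ψ x ∩ Ψ y) ∧ (∀ x, Ψ xᶜ = V \ Ψ x) ∧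
    (∀ (i : Fin n) (x : α), Ψ (A.c i x) = CSet V i (Ψ x)) ∧
    (∀ i j : Fin n, Ψ (A.d i j) = DSet V i j)


section Proof7Aux
variable {n : ℕ} {α : Type*} {β : Type*} [BooleanAlgebra α]

lemma c_mono' {A : CylOps n α} (h6 : IsRC6 A) (i : Fin n) {x y : α} (hxy : x ≤ y) :
    A.c i x ≤ A.c i y := by
  have hx : x ⊓ A.c i y = x := inf_eq_left.2 (hxy.trans (h6.ax2 i y))
  calc A.c i x = A.c i (x ⊓ A.c i y) := by rw [hx]
    _ = A.c i x ⊓ A.c i y := h6.ax3 i x y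
    _ ≤ A.c i y := inf_le_right

lemma c_idem' {A : CylOps n α} (h6 : IsRC6 A) (i : Fin n) (x : α) :
    A.c i (A.c i x) = A.c i x := by
  have h := h6.ax3 i (A.c i x) x
  rw [inf_idem] at h
  exact le_antisymm (by rw [h]; exact inf_le_right) (h6.ax2 i (A.c i x))

lemma atom_le_of_inf_ne_bot' {x y : α} (hx : IsAtom x) (h : x ⊓ y ≠ ⊥) : x ≤ y := by
  rcases (inf_le_left : x ⊓ y ≤ x).lt_or_eq with hl | he
  · exact absurd (hx.2 _ hl) h
  · exact inf_eq_left.1 he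

lemma replFn_same (n : ℕ) (i : Fin n) : replFn n i i = id := by
  funext k
  simp only [replFn, id]
  split
  · next h => exact h.symm
  · rfl

open Classical in
/-- The substitution pair chosen at step `t`: if the next pivot `p t` currently hosts a
tracked point (w.r.t. the tracking map `σ`) and a duplicate exists, relocate; else identity. -/
noncomputable def pickP (i : Fin n) (m : ℕ) (p : ℕ → Fin n) (hs : ℕ → Fin n → β)
    (σ : Fin n → Fin n) (t : ℕ) : Fin n × Fin n :=
  if hc : (∃ a, a ≠ p t ∧ hs (t + 1) a = hs t (p t)) ∧ t < m ∧ ∃ l, l ≠ i ∧ σ l = p t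
  then (p t, hc.1.choose) else (i, i)

/-- The accumulated tracking map after `t` steps. -/
noncomputable def tauP (i : Fin n) (m : ℕ) (p : ℕ → Fin n) (hs : ℕ → Fin n → β) :
    ℕ → Fin n → Fin n
  | 0 => id
  | t + 1 =>
      replFn n (pickP i m p hs (tauP i m p hs t) t).1
          (pickP i m p hs (tauP i m p hs t) t).2 ∘ tauP i m p hs t

/-- The cylindrification index sequence: first `i`, then the zigzag pivots. -/
def ksP (i : Fin n) (p : ℕ → Fin n) : ℕ → Fin n
  | 0 => i
  | t + 1 => p t

lemma tauSeq_pickP (i : Fin n) (m : ℕ) (p : ℕ → Fin n) (hs : ℕ → Fin n → β) (t : ℕ) :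
    tauSeq (fun t => (pickP i m p hs (tauP i m p hs t) t).1)
      (fun t => (pickP i m p hs (tauP i m p hs t) t).2) t = tauP i m p hs t := by
  induction t with
  | zero => rfl
  | succ s ih => simp only [tauSeq, tauP, ih]

/-- Key lemma: if `g` agrees with `f` off `i` and there is a zigzag from `f` to `g`,
then `N(g) ≤ c_i N(f)`. -/
lemma label_le_c {A : CylOps n α} (hRC : IsRC A) {N : PreNetwork n α β}
    (hLab : ∀ f ∈ N.edges, ∀ i j : Fin n, N.label f ≤ A.d i j ↔ f i = f j)
    {f g : Fin n → β} (hf : f ∈ N.edges) (hg : g ∈ N.edges) (i : Fin n)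
    (hgf : ∀ l, l ≠ i → g l = f l)
    (m : ℕ) (h : ℕ → Fin n → β) (hz : IsZigzag A N f g m h) :
    N.label g ≤ A.c i (N.label f) := by
  classical
  obtain ⟨h0, hm, hedge, hrange, hstep⟩ := hz
  haveI : Inhabited (Fin n) := ⟨i⟩
  choose! p hp1 hp2 hp3 using hstep
  set x := N.label f with hxdef
  set isF : ℕ → Fin n := fun t => (pickP i m p h (tauP i m p h t) t).1 with hisF
  set jsF : ℕ → Fin n := fun t => (pickP i m p h (tauP i m p h t) t).2 with hjsF
  have htauSeq : ∀ t, tauSeq isF jsF t = tauP i m p h t := tauSeq_pickP i m p h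
  -- the shared "pick" step
  have pickStep : ∀ t, t ≤ m → ∀ L : α, N.label (h t) ≤ L →
      (∀ l, l ≠ i → h t (tauP i m p h t l) = f l) →
      (N.label (h t) ≤ A.s (isF t) (jsF t) L ∧
        (∀ l, l ≠ i → h t (tauP i m p h (t + 1) l) = f l) ∧
        (t < m → ∀ l, l ≠ i → tauP i m p h (t + 1) l ≠ p t)) := by
    intro t htm L hL hB
    have htauS : tauP i m p h (t + 1) =
        replFn n (pickP i m p h (tauP i m p h t) t).1
          (pickP i m p h (tauP i m p h t) t).2 ∘ tauP i m p h t := rfl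
    -- existence of a duplicate whenever needed
    have hdup : t < m → (∃ l, l ≠ i ∧ tauP i m p h t l = p t) →
        ∃ a, a ≠ p t ∧ h (t + 1) a = h t (p t) := by
      intro htm' ⟨l, hl, hlp⟩
      have hfl : h t (p t) = f l := by rw [← hlp]; exact hB l hl
      have hmem : f l ∈ Set.range f ∩ Set.range g :=
        ⟨⟨l, rfl⟩, ⟨l, (hgf l hl)⟩⟩
      obtain ⟨b, hb⟩ := hrange (t + 1) htm' hmem
      have hbne : b ≠ p t := by
        intro hbp
        apply hp1 t htm'
        funext k
        by_cases hk : k = p t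
        · subst hk; rw [hfl, ← hb, hbp]
        · exact hp2 t htm' k hk
      exact ⟨b, hbne, by rw [hb, hfl]⟩
    by_cases hcond : (∃ a, a ≠ p t ∧ h (t + 1) a = h t (p t)) ∧ t < m ∧
        ∃ l, l ≠ i ∧ tauP i m p h t l = p t
    · have hpick : pickP i m p h (tauP i m p h t) t = (p t, hcond.1.choose) :=
        dif_pos hcond
      have haspec := hcond.1.choose_spec
      set a := hcond.1.choose with hadef
      have hanep : a ≠ p t := haspec.1
      have hta : h t a = h t (p t) := by
        rw [show h t a = h (t + 1) a from hp2 t hcond.2.1 a hanep, haspec.2]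
      refine ⟨?_, ?_, ?_⟩
      · simp only [hisF, hjsF, hpick]
        rw [CylOps.s, if_neg (Ne.symm hanep)]
        have hd : N.label (h t) ≤ A.d (p t) a :=
          (hLab (h t) (hedge t htm) (p t) a).2 hta.symm
        exact (le_inf hL hd).trans (hRC.toIsRC6.ax2 (p t) _)
      · intro l hl
        rw [htauS, hpick]
        simp only [Function.comp_apply, replFn]
        by_cases hc2 : tauP i m p h t l = p t
        · rw [if_pos hc2, hta, ← hc2]
          exact hB l hl
        · rw [if_neg hc2]
          exact hB l hl
      · intro _ l hl
        rw [htauS, hpick]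
        simp only [Function.comp_apply, replFn]
        by_cases hc2 : tauP i m p h t l = p t
        · rw [if_pos hc2]; exact hanep
        · rw [if_neg hc2]; exact hc2
    · have hpick : pickP i m p h (tauP i m p h t) t = (i, i) := dif_neg hcond
      refine ⟨?_, ?_, ?_⟩
      · simp only [hisF, hjsF, hpick]
        rw [CylOps.s, if_pos rfl]
        exact hL
      · intro l hl
        rw [htauS, hpick]
        simp only [Function.comp_apply, replFn_same, id]
        exact hB l hl
      · intro htm' l hl
        rw [htauS, hpick]
        simp only [Function.comp_apply, replFn_same, id]
        intro hlp
        exact hcond ⟨hdup htm' ⟨l, hl, hlp⟩, htm', ⟨l, hl, hlp⟩⟩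
  -- the invariant along the zigzag
  have Inv : ∀ t, t ≤ m →
      N.label (h t) ≤ lhsSeq A isF jsF (ksP i p) x (t + 1) ∧
      (∀ l, l ≠ i → h t (tauP i m p h (t + 1) l) = f l) ∧
      (t < m → ∀ l, l ≠ i → tauP i m p h (t + 1) l ≠ p t) := by
    intro t
    induction t with
    | zero =>
      intro h0m
      have hL : N.label (h 0) ≤ A.c i x := by
        rw [h0, ← hxdef]; exact hRC.toIsRC6.ax2 i x
      have hB : ∀ l, l ≠ i → h 0 (tauP i m p h 0 l) = f l := by
        intro l _
        rw [h0]; rfl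
      have hps := pickStep 0 h0m (A.c i x) hL hB
      refine ⟨?_, hps.2.1, hps.2.2⟩
      have hls : lhsSeq A isF jsF (ksP i p) x 1 = A.s (isF 0) (jsF 0) (A.c i x) := rfl
      rw [hls]
      exact hps.1
    | succ s IH =>
      intro hsm
      have hslt : s < m := hsm
      obtain ⟨IH1, IH2, IH3⟩ := IH (le_of_lt hslt)
      have hceq := hp3 s hslt
      have hL : N.label (h (s + 1)) ≤
          A.c (p s) (lhsSeq A isF jsF (ksP i p) x (s + 1)) := by
        calc N.label (h (s + 1)) ≤ A.c (p s) (N.label (h (s + 1))) :=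
              hRC.toIsRC6.ax2 (p s) _
          _ = A.c (p s) (N.label (h s)) := hceq.symm
          _ ≤ A.c (p s) (lhsSeq A isF jsF (ksP i p) x (s + 1)) :=
              c_mono' hRC.toIsRC6 (p s) IH1
      have hB : ∀ l, l ≠ i → h (s + 1) (tauP i m p h (s + 1) l) = f l := by
        intro l hl
        rw [← hp2 s hslt (tauP i m p h (s + 1) l) (IH3 hslt l hl)]
        exact IH2 l hl
      have hps := pickStep (s + 1) hsm _ hL hB
      refine ⟨?_, hps.2.1, hps.2.2⟩
      have hls : lhsSeq A isF jsF (ksP i p) x (s + 2) =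
          A.s (isF (s + 1)) (jsF (s + 1))
            (A.c (p s) (lhsSeq A isF jsF (ksP i p) x (s + 1))) := rfl
      rw [hls]
      exact hps.1
  -- applying (Ax7)
  set K := Kset (m + 1) isF (ksP i p) i with hKdef
  have hKi : ∀ l ∈ K, l ≠ i := fun l hl => Finset.ne_of_mem_erase hl
  have hside : ∀ t < m + 1, ksP i p t ∉ K.image (tauSeq isF jsF t) := by
    intro t ht hmem
    rw [Finset.mem_image] at hmem
    obtain ⟨l, hlK, hleq⟩ := hmem
    cases t with
    | zero =>
      have hli : l = i := hleq
      exact hKi l hlK hli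
    | succ s =>
      have hslt : s < m := by omega
      rw [htauSeq] at hleq
      exact (Inv s (le_of_lt hslt)).2.2 hslt l (hKi l hlK) hleq
  have hAx7 := hRC.ax7 (m + 1) (by omega) isF jsF (ksP i p) i hside x
  have hlhs : N.label g ≤ lhsSeq A isF jsF (ksP i p) x (m + 1) := by
    rw [← hm]
    exact (Inv m le_rfl).1
  have hinf : N.label g ≤ K.inf fun l => A.d l (tauSeq isF jsF (m + 1) l) := by
    refine Finset.le_inf fun l hl => ?_
    have hli := hKi l hl
    rw [htauSeq]
    refine (hLab g hg l (tauP i m p h (m + 1) l)).2 ?_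
    have hB := (Inv m le_rfl).2.1 l hli
    rw [hm] at hB
    rw [hgf l hli, hB]
  exact le_trans (le_inf hlhs hinf) hAx7

end Proof7Aux

/-- for `K ∈ {RC, DC, SC}`, complete atomic `A ∈ K_n` and a network `N`:
if `f ∈ edges(N)` and `f ∘ [i/j] ∈ edges(N)` then `N(f ∘ [i/j]) = t^i_j N(f)`. -/
theorem statement_7 (n : ℕ) (hn : 2 ≤ n) {α : Type*} {β : Type*}
    [CompleteBooleanAlgebra α] [IsAtomic α]
    (κ : CylClass) (A : CylOps n α) (hA : InClass κ A)
    (N : PreNetwork n α β) (hN : IsNetwork κ A N)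
    (f : Fin n → β) (hf : f ∈ N.edges) (i j : Fin n)
    (hfe : (f ∘ replFn n i j) ∈ N.edges) :
    N.label (f ∘ replFn n i j) = A.t i j (N.label f) := by
  classical
  obtain ⟨-, -, hLab, hZig⟩ := hN
  have hRC : IsRC A := by
    cases κ with
    | RC => exact hA
    | DC => exact hA.toIsRC
    | SC => exact hA.toIsDC.toIsRC
  by_cases hij : i = j
  · subst hij
    rw [show f ∘ replFn n i i = f by rw [replFn_same, Function.comp_id], CylOps.t, if_pos rfl]
  · have htd : A.t i j (N.label f) = A.c i (N.label f) ⊓ A.d i j := by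
      rw [CylOps.t, if_neg hij]
    have hgl : ∀ l, l ≠ i → (f ∘ replFn n i j) l = f l := by
      intro l hl
      simp only [Function.comp_apply, replFn, if_neg hl]
    have hgij : (f ∘ replFn n i j) i = f j := by
      simp [replFn]
    by_cases hfij : f i = f j
    · have hgf : f ∘ replFn n i j = f := by
        funext k
        by_cases hk : k = i
        · subst hk; rw [hgij, hfij]
        · exact hgl k hk
      rw [hgf, htd]
      refine le_antisymm (le_inf (hRC.toIsRC6.ax2 i _) ((hLab f hf i j).2 hfij)) ?_
      have h6 := hRC.toIsRC6.ax6 i j (N.label f) hij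
      rw [inf_eq_left.2 ((hLab f hf i j).2 hfij)] at h6
      exact h6
    · haveI : Nonempty (Fin n) := ⟨i⟩
      have hsub : Set.range (f ∘ replFn n i j) ⊆ Set.range f := by
        rintro y ⟨k, rfl⟩
        exact ⟨replFn n i j k, rfl⟩
      have hS : Set.range f ∩ Set.range (f ∘ replFn n i j) =
          Set.range (f ∘ replFn n i j) := Set.inter_eq_self_of_subset_right hsub
      have hpos : 0 < (Set.range f ∩ Set.range (f ∘ replFn n i j)).ncard := by
        rw [hS, Set.ncard_pos (Set.finite_range _)]
        exact Set.range_nonempty _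
      have hlt : (Set.range f ∩ Set.range (f ∘ replFn n i j)).ncard < n := by
        rw [hS]
        have h1 : Set.range (f ∘ replFn n i j) ⊆ f '' {i}ᶜ := by
          rintro y ⟨k, rfl⟩
          refine ⟨replFn n i j k, ?_, rfl⟩
          simp only [Set.mem_compl_iff, Set.mem_singleton_iff, replFn]
          by_cases hk : k = i
          · rw [if_pos hk]; exact Ne.symm hij
          · rw [if_neg hk]; exact hk
        calc (Set.range (f ∘ replFn n i j)).ncard
            ≤ (f '' {i}ᶜ).ncard := Set.ncard_le_ncard h1 (Set.toFinite _)
          _ ≤ ({i}ᶜ : Set (Fin n)).ncard := Set.ncard_image_le (Set.toFinite _)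
          _ < (Set.univ : Set (Fin n)).ncard := by
              refine Set.ncard_lt_ncard ?_ (Set.toFinite _)
              rw [Set.ssubset_univ_iff]
              intro hu
              have : i ∈ ({i}ᶜ : Set (Fin n)) := hu ▸ Set.mem_univ i
              exact this rfl
          _ = n := by rw [Set.ncard_univ, Nat.card_eq_fintype_card, Fintype.card_fin]
      obtain ⟨m, hh, hz⟩ := hZig f hf _ hfe hpos hlt
      have hle : N.label (f ∘ replFn n i j) ≤ A.c i (N.label f) :=
        label_le_c hRC hLab hf hfe i hgl m hh hz
      have hd : N.label (f ∘ replFn n i j) ≤ A.d i j := by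
        refine (hLab _ hfe i j).2 ?_
        rw [hgij, hgl j (Ne.symm hij)]
      have hyatom : IsAtom (N.label (f ∘ replFn n i j)) := N.label_atom _ hfe
      have hxatom : IsAtom (N.label f) := N.label_atom f hf
      rw [htd]
      refine le_antisymm (le_inf hle hd) ?_
      have hxy : N.label f ≤ A.c i (N.label (f ∘ replFn n i j)) := by
        refine atom_le_of_inf_ne_bot' hxatom ?_
        intro hbot
        have hcc : A.c i (N.label f) ⊓ A.c i (N.label (f ∘ replFn n i j)) = ⊥ := by
          rw [← hRC.toIsRC6.ax3 i _ _, hbot, hRC.toIsRC6.ax1]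
        have hy1 : N.label (f ∘ replFn n i j) ≤
            A.c i (N.label f) ⊓ A.c i (N.label (f ∘ replFn n i j)) :=
          le_inf hle (hRC.toIsRC6.ax2 i _)
        rw [hcc] at hy1
        exact hyatom.1 (le_bot_iff.1 hy1)
      have hcxy : A.c i (N.label f) ≤ A.c i (N.label (f ∘ replFn n i j)) := by
        calc A.c i (N.label f)
            ≤ A.c i (A.c i (N.label (f ∘ replFn n i j))) := c_mono' hRC.toIsRC6 i hxy
          _ = A.c i (N.label (f ∘ replFn n i j)) := c_idem' hRC.toIsRC6 i _
      have h6 := hRC.toIsRC6.ax6 i j (N.label (f ∘ replFn n i j)) hij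
      rw [inf_eq_left.2 hd] at h6
      exact le_trans (inf_le_inf_right _ hcxy) h6

end CylRep
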